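/- arXiv:2012.08944 — 2 statements merged into one kernel-verified Lean document; each statement's English description precedes it below -/
import Mathlib

section
/- For every integer n ≥ 1, every integer p, every real y, and every complex z, the sum over all integers k of J_{kn+p}(z)·e^{ikny} equals (1/n)·Σ_{ℓ=0}^{n-1} e^{iz·sin(y+2πℓ/n)} · e^{-ip(y+2πℓ/n)}, where J_m denotes the Bessel function of the first kind of integer order m. -/
open scoped Real

/-- Bessel function of the first kind of integer order `m`,
defined by `J_m(z) = (1/2π) ∫_0^{2π} e^{i z sin θ - i m θ} dθ`. -/
noncomputable def besselJ (m : ℤ) (z : ℂ) : ℂ :=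
  (1 / (2 * Real.pi)) * ∫ θ in (0:ℝ)..(2 * Real.pi),
    Complex.exp (z * Complex.sin (θ:ℂ) * Complex.I - (m:ℂ) * (θ:ℂ) * Complex.I)

/-!
`J_m(z)` is the `m`-th Fourier coefficient of the smooth `2π`-periodic function
`θ ↦ e^{iz sin θ}`. Integrating by parts twice shows that the Fourier coefficients of a `C²`
periodic function are `O(1/m²)`, so its Fourier series converges absolutely and pointwise to it:
this is the Jacobi–Anger expansion `e^{iz sin θ} = ∑ₘ J_m(z) e^{imθ}`. Averaging
`e^{-ipθ} e^{iz sin θ}` over the `n` points `θ = y + 2πℓ/n` kills, by orthogonality of the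
`n`-th roots of unity, every term with `m ≢ p (mod n)`, leaving the terms `m = kn + p`.
-/

open Complex Finset Function
open scoped Interval

theorem Function.Periodic.deriv {𝕜 E : Type*} [NontriviallyNormedField 𝕜] [NormedAddCommGroup E]
    [NormedSpace 𝕜 E] {f : 𝕜 → E} {T : 𝕜} (hf : Periodic f T) :
    Periodic (deriv f) T :=
  fun x => by rw [← deriv_comp_add_const, show (fun x => f (x + T)) = f from funext hf]

theorem AddCircle.liftIoc_coe_apply_of_periodic {p : ℝ} [Fact (0 < p)] {B : Type*} {f : ℝ → B}
    (hf : Periodic f p) (a x : ℝ) : AddCircle.liftIoc p a f x = f x := by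
  simp only [AddCircle.liftIoc, AddCircle.equivIoc, comp_apply, QuotientAddGroup.equivIocMod_coe,
    Set.domRestrict_apply, toIocMod]
  exact hf.sub_zsmul_eq _

section FourierCoefficients

variable {a b : ℝ} (hab : a < b)
include hab

theorem fourierCoeffOn_of_hasDerivAt_of_eq {f f' : ℝ → ℂ} {n : ℤ} (hn : n ≠ 0)
    (hf : ∀ x ∈ [[a, b]], HasDerivAt f (f' x) x)
    (hf' : IntervalIntegrable f' MeasureTheory.volume a b) (hfab : f b = f a) :
    fourierCoeffOn hab f n = (b - a) / (2 * π * I * n) * fourierCoeffOn hab f' n := by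
  rw [fourierCoeffOn_of_hasDerivAt hab hn hf hf', hfab, sub_self, mul_zero, zero_sub]
  ring

theorem norm_fourierCoeffOn_le {E : Type*} [NormedAddCommGroup E] [NormedSpace ℂ E]
    {f : ℝ → E} {M : ℝ} (hM : ∀ x ∈ Ι a b, ‖f x‖ ≤ M) (n : ℤ) :
    ‖fourierCoeffOn hab f n‖ ≤ M := by
  have hba : 0 < b - a := sub_pos.mpr hab
  have hint : ‖∫ x in a..b, fourier (-n) (x : AddCircle (b - a)) • f x‖ ≤ M * |b - a| :=
    intervalIntegral.norm_integral_le_of_norm_le_const fun x hx => by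
      rw [norm_smul, fourier_apply, Circle.norm_coe, one_mul]
      exact hM x hx
  rw [fourierCoeffOn_eq_integral, norm_smul, Real.norm_eq_abs, abs_of_pos (by positivity)]
  calc 1 / (b - a) * ‖∫ x in a..b, fourier (-n) (x : AddCircle (b - a)) • f x‖
      ≤ 1 / (b - a) * (M * |b - a|) := by gcongr
    _ = M := by rw [abs_of_pos hba]; field_simp

theorem summable_fourierCoeffOn_of_contDiff {f : ℝ → ℂ} (hf : ContDiff ℝ 2 f)
    (hper : Periodic f (b - a)) : Summable (fourierCoeffOn hab f) := by
  have endpoints {g : ℝ → ℂ} (hg : Periodic g (b - a)) : g b = g a := by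
    simpa using hg a
  have hf1 : ContDiff ℝ 1 (deriv f) := hf.iterate_deriv' 1 1
  have hf2 : Continuous (deriv (deriv f)) := hf1.continuous_deriv le_rfl
  have hcoeff (n : ℤ) (hn : n ≠ 0) : fourierCoeffOn hab f n =
      ((b - a) / (2 * π * I * n)) ^ 2 * fourierCoeffOn hab (deriv (deriv f)) n := by
    rw [fourierCoeffOn_of_hasDerivAt_of_eq hab hn
        (fun x _ => (hf.differentiable two_ne_zero x).hasDerivAt)
        (hf1.continuous.intervalIntegrable _ _) (endpoints hper),
      fourierCoeffOn_of_hasDerivAt_of_eq hab hn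
        (fun x _ => (hf1.differentiable one_ne_zero x).hasDerivAt)
        (hf2.intervalIntegrable _ _) (endpoints hper.deriv)]
    ring
  obtain ⟨M, hM⟩ :=
    (isCompact_uIcc (a := a) (b := b)).exists_bound_of_continuousOn hf2.continuousOn
  have hnorm (n : ℤ) : ‖(b - a) / (2 * π * I * n)‖ ^ 2 =
      ((b - a) / (2 * π)) ^ 2 * (1 / (n : ℝ) ^ 2) := by
    rw [← ofReal_sub, norm_div, norm_mul, norm_mul, norm_mul, norm_I, Complex.norm_real,
      Complex.norm_real, norm_ofNat, Complex.norm_intCast,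
      Real.norm_of_nonneg (sub_pos.mpr hab).le, Real.norm_of_nonneg Real.pi_pos.le, mul_one,
      div_mul_eq_div_div, div_pow, sq_abs]
    ring
  refine .of_norm_bounded_eventually
    ((Real.summable_one_div_int_pow.mpr one_lt_two).mul_left (((b - a) / (2 * π)) ^ 2 * M))
    ((Filter.eventually_cofinite_ne 0).mono fun n hn => ?_)
  calc ‖fourierCoeffOn hab f n‖
      ≤ ‖(b - a) / (2 * π * I * n)‖ ^ 2 * M := by
        rw [hcoeff n hn, norm_mul, norm_pow]
        gcongr
        exact norm_fourierCoeffOn_le hab (fun x hx => hM x (Set.uIoc_subset_uIcc hx)) n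
    _ = ((b - a) / (2 * π)) ^ 2 * M * (1 / (n : ℝ) ^ 2) := by rw [hnorm]; ring

theorem hasSum_fourierCoeffOn_mul_fourier_of_contDiff {f : ℝ → ℂ} (hf : ContDiff ℝ 2 f)
    (hper : Periodic f (b - a)) (x : ℝ) :
    HasSum (fun n : ℤ => fourierCoeffOn hab f n * fourier n (x : AddCircle (b - a))) (f x) := by
  have : Fact (0 < b - a) := ⟨sub_pos.mpr hab⟩
  let F : C(AddCircle (b - a), ℂ) := ⟨AddCircle.liftIoc (b - a) a f,
    AddCircle.liftIoc_continuous (hper a).symm hf.continuous.continuousOn⟩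
  have hF (t : ℝ) : F t = f t := AddCircle.liftIoc_coe_apply_of_periodic hper a t
  have hcoeff : fourierCoeff F = fourierCoeffOn hab f := funext fun n => by
    simp only [fourierCoeff_eq_intervalIntegral _ n a, fourierCoeffOn_eq_integral, hF,
      add_sub_cancel]
  have hsummable : Summable (fourierCoeff F) := by
    rw [hcoeff]
    exact summable_fourierCoeffOn_of_contDiff hab hf hper
  simpa only [hcoeff, hF, smul_eq_mul] using
    has_pointwise_sum_fourier_series_of_summable hsummable (x : AddCircle (b - a))

end FourierCoefficients

theorem IsPrimitiveRoot.geom_sum_zpow {K : Type*} [Field K] {ζ : K} {n : ℕ}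
    (hζ : IsPrimitiveRoot ζ n) (m : ℤ) :
    ∑ ℓ ∈ range n, (ζ ^ m) ^ ℓ = if (n : ℤ) ∣ m then (n : K) else 0 := by
  split_ifs with hdvd
  · simp [(hζ.zpow_eq_one_iff_dvd m).mpr hdvd]
  · have hne : ζ ^ m ≠ 1 := mt (hζ.zpow_eq_one_iff_dvd m).mp hdvd
    have hpow : (ζ ^ m) ^ n = 1 := by
      rw [← zpow_natCast, ← zpow_mul, mul_comm, zpow_mul, zpow_natCast, hζ.pow_eq_one, one_zpow]
    rw [geom_sum_eq hne, hpow, sub_self, zero_div]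

theorem sum_range_cexp_two_pi_I_mul_div {n : ℕ} (hn : n ≠ 0) (m : ℤ) :
    ∑ ℓ ∈ range n, cexp (2 * π * I * m * ℓ / n) = if (n : ℤ) ∣ m then (n : ℂ) else 0 := by
  rw [← (isPrimitiveRoot_exp n hn).geom_sum_zpow m]
  refine sum_congr rfl fun ℓ _ => ?_
  rw [← exp_int_mul, ← exp_nat_mul]
  congr 1
  ring

theorem hasSum_multisection {c : ℤ → ℂ} {F : ℝ → ℂ}
    (hF : ∀ θ : ℝ, HasSum (fun m : ℤ => c m * cexp (I * m * θ)) (F θ)) {n : ℕ} (hn : n ≠ 0)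
    (p : ℤ) (y : ℝ) :
    HasSum (fun k : ℤ => c (k * n + p) * cexp (I * k * n * y))
      (1 / n * ∑ ℓ ∈ range n,
        F (y + 2 * π * ℓ / n) * cexp (-I * p * ((y + 2 * π * ℓ / n : ℝ) : ℂ))) := by
  have hn' : (n : ℂ) ≠ 0 := Nat.cast_ne_zero.mpr hn
  set θ : ℕ → ℝ := fun ℓ => y + 2 * π * ℓ / n
  set g : ℤ → ℂ := fun m => if (n : ℤ) ∣ m - p then c m * cexp (I * (m - p) * y) else 0
  have hterm (m : ℤ) :
      1 / n * ∑ ℓ ∈ range n, c m * cexp (I * m * θ ℓ) * cexp (-I * p * θ ℓ) = g m := by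
    have hsplit (ℓ : ℕ) : c m * cexp (I * m * θ ℓ) * cexp (-I * p * θ ℓ) =
        c m * cexp (I * (m - p) * y) * cexp (2 * π * I * ((m - p : ℤ) : ℂ) * ℓ / n) := by
      simp only [mul_assoc (c m), ← exp_add]
      push_cast [θ]
      ring_nf
    simp only [hsplit, ← mul_sum, sum_range_cexp_two_pi_I_mul_div hn, g]
    split_ifs
    · field_simp
    · simp
  have hsum : HasSum g (1 / n * ∑ ℓ ∈ range n, F (θ ℓ) * cexp (-I * p * θ ℓ)) := by
    simpa only [hterm] using (hasSum_sum (s := range n) fun ℓ _ =>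
      (hF (θ ℓ)).mul_right (cexp (-I * p * θ ℓ))).mul_left (1 / (n : ℂ))
  have hinj : Injective fun k : ℤ => k * n + p := fun k l hkl => by
    simpa [hn] using hkl
  rw [← hinj.hasSum_iff fun m hm => if_neg fun ⟨k, hk⟩ => hm ⟨k, by linear_combination -hk⟩]
    at hsum
  convert hsum using 2 with k
  simp only [comp_apply, add_sub_cancel_right, dvd_mul_left, if_true]
  push_cast
  ring_nf

theorem besselJ_eq_fourierCoeffOn (m : ℤ) (z : ℂ) :
    besselJ m z = fourierCoeffOn Real.two_pi_pos (fun θ : ℝ => cexp (I * z * Real.sin θ)) m := by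
  rw [besselJ, fourierCoeffOn_eq_integral, sub_zero, real_smul]
  push_cast
  congr 1
  refine intervalIntegral.integral_congr fun θ _ => ?_
  rw [fourier_coe_apply, smul_eq_mul, ← exp_add]
  congr 1
  push_cast
  field_simp
  ring

theorem hasSum_besselJ_mul_cexp (z : ℂ) (θ : ℝ) :
    HasSum (fun m : ℤ => besselJ m z * cexp (I * m * θ)) (cexp (I * z * Real.sin θ)) := by
  have hper : Periodic (fun θ : ℝ => cexp (I * z * Real.sin θ)) (2 * π - 0) := by
    simp [Real.sin_add_two_pi]
  have hsmooth : ContDiff ℝ 2 (fun θ : ℝ => cexp (I * z * Real.sin θ)) :=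
    contDiff_exp.comp (contDiff_const.mul (ofRealCLM.contDiff.comp Real.contDiff_sin))
  convert hasSum_fourierCoeffOn_mul_fourier_of_contDiff Real.two_pi_pos hsmooth hper θ using 2 with m
  rw [besselJ_eq_fourierCoeffOn, fourier_coe_apply, sub_zero]
  congr 2
  push_cast
  field_simp

theorem statement0 (n : ℤ) (hn : 1 ≤ n) (p : ℤ) (y : ℝ) (z : ℂ) :
    (∑' k : ℤ, besselJ (k * n + p) z * Complex.exp (Complex.I * (k:ℂ) * (n:ℂ) * (y:ℂ))) =
      (1 / (n:ℂ)) * ∑ ℓ ∈ Finset.range n.toNat,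
        Complex.exp (Complex.I * z * (Real.sin (y + 2 * π * ℓ / n) : ℂ)) *
          Complex.exp (-Complex.I * (p:ℂ) * ((y + 2 * π * ℓ / n : ℝ) : ℂ)) := by
  lift n to ℕ using by omega
  simpa only [Int.toNat_natCast, Int.cast_natCast] using
    (hasSum_multisection (hasSum_besselJ_mul_cexp z) (by omega) p y).tsum_eq
end

section
/- For every integer n ≥ 1, integers p and q, real t, and real z: Σ_{k∈ℤ} J_{p+kn}(z)·J_{q−kn}(z)·e^{2iknt} = (1/n)·Σ_{ℓ=0}^{n-1} e^{−i(p−q)(t+πℓ/n)}·J_{p+q}(2z·cos(t+πℓ/n)). -/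
/-!
Put `g_z(x) = exp (i z sin x)` on the circle `ℝ ⧸ 2πℤ`. Then `J_m(z)` is the `m`-th Fourier
coefficient of `g_z`, and `g_z(x + 2s) g_z(x) = g_{2z cos s}(x + s)`. Parseval's identity turns the
Fourier coefficient of a product into a convolution of coefficients, so comparing the `(p+q)`-th
coefficients of both sides gives the case `n = 1`:
`∑ₘ J_{p+m}(z) J_{q-m}(z) e^{2ims} = e^{-i(p-q)s} J_{p+q}(2z cos s)`.
Averaging this over `s = t + πℓ/n`, `ℓ < n`, kills the terms with `n ∤ m`.
-/

open scoped Real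

open Complex AddCircle MeasureTheory Finset
open scoped ComplexConjugate

theorem fourier_apply_add {T : ℝ} (n : ℤ) (x y : AddCircle T) :
    fourier n (x + y) = fourier n x * fourier n y := by
  simp only [fourier_apply, smul_add, toCircle_add, Circle.coe_mul]

section FourierCoeff

variable {T : ℝ} [Fact (0 < T)]

theorem fourierCoeff_comp_add_right {E : Type*} [NormedAddCommGroup E] [NormedSpace ℂ E]
    (f : AddCircle T → E) (a : AddCircle T) (n : ℤ) :
    fourierCoeff (fun x => f (x + a)) n = fourier n a • fourierCoeff f n := by
  rw [fourierCoeff, fourierCoeff, ← integral_smul,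
    ← integral_add_right_eq_self (fun x => fourier (-n) x • f (x + a)) (-a)]
  congr 1 with x
  rw [neg_add_cancel_right, smul_smul, fourier_apply_add, mul_comm]
  simp [fourier_apply]

/-- Parseval's identity `⟪f̄ e_N, g⟫ = ∑ ⟪f̄ e_N, e_j⟫ ⟪e_j, g⟫`, read off coefficientwise. -/
theorem hasSum_fourierCoeff_mul {f g : AddCircle T → ℂ} (hf : Continuous f) (hg : Continuous g)
    (N : ℤ) :
    HasSum (fun j => fourierCoeff f (N - j) * fourierCoeff g j)
      (fourierCoeff (fun x => f x * g x) N) := by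
  set a : C(AddCircle T, ℂ) := star ⟨f, hf⟩ * fourier N
  have H := fourierBasis.hasSum_inner_mul_inner (ContinuousMap.toLp 2 haarAddCircle ℂ a)
    (ContinuousMap.toLp 2 haarAddCircle ℂ ⟨g, hg⟩)
  simp only [← inner_conj_symm _ (fourierBasis _), ← HilbertBasis.repr_apply_apply,
    fourierBasis_repr, fourierCoeff_toLp, ContinuousMap.inner_toLp] at H
  have ha (j : ℤ) : conj (fourierCoeff a j) = fourierCoeff f (N - j) := by
    rw [fourierCoeff, fourierCoeff, ← integral_conj]
    congr 1 with x
    simp only [a, ContinuousMap.mul_apply, ContinuousMap.star_apply, ContinuousMap.coe_mk,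
      RCLike.star_def, smul_eq_mul, map_mul, conj_conj, ← fourier_neg, neg_neg, neg_sub,
      sub_eq_add_neg j, fourier_add]
    ring
  have hfg : ∫ x, g x * conj (a x) ∂haarAddCircle = fourierCoeff (fun x => f x * g x) N := by
    rw [fourierCoeff]
    congr 1 with x
    simp only [a, ContinuousMap.mul_apply, ContinuousMap.star_apply, ContinuousMap.coe_mk,
      RCLike.star_def, smul_eq_mul, map_mul, conj_conj, ← fourier_neg]
    ring
  simpa only [ha, hfg, ContinuousMap.coe_mk] using H

end FourierCoeff

instance : Fact (0 < 2 * π) := ⟨Real.two_pi_pos⟩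

theorem fourier_coe_two_pi (n : ℤ) (x : ℝ) :
    fourier n (x : AddCircle (2 * π)) = exp (n * x * I) := by
  rw [fourier_coe_apply]
  congr 1
  field_simp
  push_cast
  ring

/-- The Bessel generating function `exp ((z / 2) (w - w⁻¹))` evaluated at `w = e^{iθ}`. -/
noncomputable def besselGen (z : ℂ) : C(AddCircle (2 * π), ℂ) where
  toFun x := exp (z / 2 * (fourier 1 x - fourier (-1) x))
  continuous_toFun := by fun_prop

theorem fourierCoeff_besselGen (z : ℂ) (m : ℤ) : fourierCoeff (besselGen z) m = besselJ m z := by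
  rw [fourierCoeff_eq_intervalIntegral _ m 0, zero_add, besselJ, real_smul]
  push_cast
  congr 1
  refine intervalIntegral.integral_congr fun θ _ => ?_
  have hsin := two_sin (θ : ℂ)
  simp only [besselGen, ContinuousMap.coe_mk, fourier_coe_two_pi, smul_eq_mul, ← exp_add]
  congr 1
  push_cast
  simp only [one_mul, neg_mul] at hsin ⊢
  linear_combination (-(z / 2) * I) * hsin + z / 2 * (exp (θ * I) - exp (-(θ * I))) * I_sq

theorem besselGen_add_add_mul (z : ℂ) (x a : AddCircle (2 * π)) :
    besselGen z (x + (a + a)) * besselGen z x =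
      besselGen (z * (fourier 1 a + fourier (-1) a)) (x + a) := by
  have h : fourier 1 a * fourier (-1) a = 1 := by
    rw [← fourier_add, add_neg_cancel, fourier_zero]
  simp only [besselGen, ContinuousMap.coe_mk, fourier_apply_add, ← exp_add]
  congr 1
  linear_combination (-(z / 2) * (fourier 1 x - fourier (-1) x)) * h

theorem hasSum_besselJ_mul_besselJ_mul_exp (p q : ℤ) (z : ℂ) (s : ℝ) :
    HasSum (fun m : ℤ => besselJ (p + m) z * besselJ (q - m) z * exp (2 * I * m * s))
      (exp (-I * (p - q) * s) * besselJ (p + q) (2 * z * cos s)) := by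
  set a : AddCircle (2 * π) := ↑s
  have hcos : z * (fourier 1 a + fourier (-1) a) = 2 * z * cos s := by
    rw [mul_comm 2 z, mul_assoc, two_cos]
    simp only [a, fourier_coe_two_pi, Int.cast_one, Int.cast_neg, one_mul, neg_mul]
  have hexp (k : ℤ) : fourier k (a + a) = exp (2 * k * s * I) := by
    rw [← AddCircle.coe_add, fourier_coe_two_pi]
    congr 1
    push_cast
    ring
  have H := hasSum_fourierCoeff_mul (f := fun x => besselGen z (x + (a + a)))
    (by fun_prop) (besselGen z).continuous (p + q)
  simp only [besselGen_add_add_mul, hcos, fourierCoeff_comp_add_right,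
    fourierCoeff_besselGen, smul_eq_mul, hexp] at H
  rw [fourier_coe_two_pi] at H
  have H' := ((Equiv.subLeft q).hasSum_iff.mpr H).mul_left (exp (-(2 * p * s * I)))
  have hval : exp (-I * (p - q) * s) = exp (-(2 * p * s * I)) * exp (↑(p + q) * s * I) := by
    rw [← exp_add]
    congr 1
    push_cast
    ring
  rw [hval, mul_assoc]
  refine H'.congr_fun fun m => ?_
  have hm : exp (-(2 * p * s * I)) * exp (2 * ↑(p + m) * s * I) = exp (2 * I * m * s) := by
    rw [← exp_add]
    congr 1
    push_cast
    ring
  rw [Function.comp_apply, Equiv.subLeft_apply, show p + q - (q - m) = p + m by ring, ← hm]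
  ring

theorem sum_range_exp_two_pi_mul_I (n : ℕ) (hn : n ≠ 0) (m : ℤ) :
    ∑ ℓ ∈ range n, exp (2 * π * I * m * ℓ / n) = if (n : ℤ) ∣ m then (n : ℂ) else 0 := by
  have hζ := isPrimitiveRoot_exp n hn
  have hterm (ℓ : ℕ) : exp (2 * π * I * m * ℓ / n) = (exp (2 * π * I / n) ^ m) ^ ℓ := by
    rw [← zpow_natCast, ← zpow_mul, ← exp_int_mul]
    congr 1
    push_cast
    ring
  simp only [hterm]
  split_ifs with hdvd
  · simp [(hζ.zpow_eq_one_iff_dvd m).mpr hdvd]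
  · rw [geom_sum_eq (mt (hζ.zpow_eq_one_iff_dvd m).mp hdvd), ← zpow_natCast, ← zpow_mul,
      mul_comm m, zpow_mul, zpow_natCast, hζ.pow_eq_one, one_zpow, sub_self, zero_div]

theorem hasSum_comp_mul_right_iff {M : Type*} [AddCommMonoid M] [TopologicalSpace M]
    (f : ℤ → M) {n : ℤ} (hn : n ≠ 0) (a : M) :
    HasSum (fun k => f (k * n)) a ↔ HasSum (fun m => if n ∣ m then f m else 0) a := by
  refine Iff.trans ?_ ((mul_left_injective₀ hn).hasSum_iff ?_)
  · simp [Function.comp_def]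
  · rintro m hm
    simp only [ite_eq_right_iff]
    rintro ⟨k, rfl⟩
    exact absurd ⟨k, mul_comm k n⟩ hm

theorem sum_range_exp_two_I_mul_add_pi_div (n : ℕ) (hn : n ≠ 0) (m : ℤ) (t : ℝ) :
    ∑ ℓ ∈ range n, exp (2 * I * m * ((t + π * ℓ / n : ℝ) : ℂ)) =
      if (n : ℤ) ∣ m then n * exp (2 * I * m * t) else 0 := by
  have hsplit (ℓ : ℕ) : exp (2 * I * m * ((t + π * ℓ / n : ℝ) : ℂ)) =
      exp (2 * I * m * t) * exp (2 * π * I * m * ℓ / n) := by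
    rw [← exp_add]
    congr 1
    push_cast
    ring
  simp only [hsplit, ← mul_sum, sum_range_exp_two_pi_mul_I n hn m]
  split_ifs <;> ring

theorem statement16 (n : ℤ) (hn : 1 ≤ n) (p q : ℤ) (t z : ℝ) :
    (∑' k : ℤ, besselJ (p + k * n) z * besselJ (q - k * n) z *
        Complex.exp (2 * Complex.I * (k:ℂ) * (n:ℂ) * (t:ℂ))) =
      (1 / (n:ℂ)) * ∑ ℓ ∈ Finset.range n.toNat,
        Complex.exp (-Complex.I * ((p:ℂ) - (q:ℂ)) * ((t + π * ℓ / n : ℝ) : ℂ)) *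
          besselJ (p + q) ((2 * z * Real.cos (t + π * ℓ / n) : ℝ) : ℂ) := by
  lift n to ℕ using by omega
  have hn0 : n ≠ 0 := by omega
  have hcos (x : ℝ) : ((2 * z * Real.cos x : ℝ) : ℂ) = 2 * z * cos x := by push_cast; rfl
  simp only [Int.toNat_natCast, Int.cast_natCast, hcos]
  have H := hasSum_sum (s := range n) fun ℓ _ =>
    hasSum_besselJ_mul_besselJ_mul_exp p q z (t + π * ℓ / n)
  simp only [← mul_sum, sum_range_exp_two_I_mul_add_pi_div n hn0, mul_ite, mul_zero] at H
  rw [← hasSum_comp_mul_right_iff _ (mod_cast hn0)] at H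
  rw [← H.tsum_eq, ← tsum_mul_left]
  refine tsum_congr fun k => ?_
  push_cast
  field_simp
end
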